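/- Let G be an r-regular graph on n vertices with edge set E and Laplacian second eigenvalue λ₂ > 0. Let X¹,...,Xⁿ ∈ ℝᵈ with mean μ and potential Γ = ∑ᵢ‖Xⁱ−μ‖². If an edge (i,j) is chosen uniformly at random from the rn/2 edges and the update Yⁱ = Yʲ = (Xⁱ+Xʲ)/2, Yᵏ = Xᵏ for k≠i,j is applied, then the expected new potential satisfies E[∑ₖ‖Yᵏ − μ‖²] ≤ (1 − λ₂/(rn)) Γ. -/

import Mathlib

/-!
By Apollonius's theorem, replacing `Xⁱ` and `Xʲ` by their midpoint lowers the potential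
`∑ₖ ‖Xᵏ - μ‖²` by exactly `‖Xⁱ - Xʲ‖² / 2`, for every centre `μ`. Averaging this over the
`rn` ordered pairs of adjacent vertices, the expected potential is `Γ - S / (rn)` with `S` the sum
of `‖Xⁱ - Xʲ‖²` over the edges, and `S ≥ λ₂ Γ` gives the bound.
-/

open Finset

section PairAverage

variable {ι E : Type*} [Fintype ι] [DecidableEq ι]
  [NormedAddCommGroup E] [InnerProductSpace ℝ E]

/-- The update `Y` of the statement for the chosen edge `(i, j)`. -/
noncomputable def pairAverage (X : ι → E) (i j : ι) : ι → E :=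
  fun k => if k = i ∨ k = j then midpoint ℝ (X i) (X j) else X k

theorem norm_midpoint_sub_sq (x y c : E) :
    ‖midpoint ℝ x y - c‖ ^ 2 = (‖x - c‖ ^ 2 + ‖y - c‖ ^ 2) / 2 - ‖x - y‖ ^ 2 / 4 := by
  have h := EuclideanGeometry.dist_sq_add_dist_sq_eq_two_mul_dist_midpoint_sq_add_half_dist_sq
    c x y
  simp only [dist_comm c, dist_eq_norm] at h
  linarith

theorem sum_norm_pairAverage_sub_sq (X : ι → E) (c : E) {i j : ι} (hij : i ≠ j) :
    ∑ k, ‖pairAverage X i j k - c‖ ^ 2 = ∑ k, ‖X k - c‖ ^ 2 - ‖X i - X j‖ ^ 2 / 2 := by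
  have hchange : ∑ k, (‖pairAverage X i j k - c‖ ^ 2 - ‖X k - c‖ ^ 2)
      = ∑ k ∈ {i, j}, (‖pairAverage X i j k - c‖ ^ 2 - ‖X k - c‖ ^ 2) := by
    refine (sum_subset (subset_univ _) fun k _ hk => ?_).symm
    simp only [mem_insert, mem_singleton] at hk
    simp [pairAverage, hk]
  have hi : pairAverage X i j i = midpoint ℝ (X i) (X j) := if_pos (Or.inl rfl)
  have hj : pairAverage X i j j = midpoint ℝ (X i) (X j) := if_pos (Or.inr rfl)
  rw [sum_pair hij, hi, hj, sum_sub_distrib, norm_midpoint_sub_sq] at hchange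
  linarith

end PairAverage

theorem SimpleGraph.IsRegularOfDegree.sum_sum_ite_adj_const {V R : Type*} [Fintype V]
    [Semiring R] {G : SimpleGraph V} [DecidableRel G.Adj] {r : ℕ}
    (hreg : G.IsRegularOfDegree r) (c : R) :
    ∑ i, ∑ j, (if G.Adj i j then c else 0) = Fintype.card V * r * c := by
  simp only [← sum_filter, sum_const, ← neighborFinset_eq_filter, card_neighborFinset_eq_degree,
    hreg _, nsmul_eq_mul, card_univ, mul_assoc]

theorem expected_potential_decrease_general (n d r : ℕ) (hn : 0 < n) (hr : 0 < r)
    (G : SimpleGraph (Fin n)) [DecidableRel G.Adj]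
    (hreg : G.IsRegularOfDegree r)
    (lam2 : ℝ)
    (X : Fin n → EuclideanSpace ℝ (Fin d))
    (μ : EuclideanSpace ℝ (Fin d))
    (Γ : ℝ) (hΓ : Γ = ∑ k, ‖X k - μ‖ ^ 2)
    (hlam : lam2 * Γ ≤
      (1 / 2) * ∑ i, ∑ j, if G.Adj i j then ‖X i - X j‖ ^ 2 else 0)
    (Y : Fin n → Fin n → Fin n → EuclideanSpace ℝ (Fin d))
    (hY : ∀ i j k, Y i j k =
      if k = i ∨ k = j then (2 : ℝ)⁻¹ • (X i + X j) else X k) :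
    ((r : ℝ) * n / 2)⁻¹ *
        ((1 / 2) * ∑ i, ∑ j, if G.Adj i j then (∑ k, ‖Y i j k - μ‖ ^ 2) else 0) ≤
      (1 - lam2 / ((r : ℝ) * n)) * Γ := by
  have hYavg : ∀ i j, Y i j = pairAverage X i j := fun i j => funext fun k => by
    rw [hY, pairAverage, midpoint_eq_smul_add, invOf_eq_inv]
  have hedge : ∀ i j, G.Adj i j → ∑ k, ‖Y i j k - μ‖ ^ 2 = Γ - ‖X i - X j‖ ^ 2 / 2 :=
    fun i j h => by rw [hΓ, hYavg, sum_norm_pairAverage_sub_sq X μ (G.ne_of_adj h)]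
  have hsum : ∑ i, ∑ j, (if G.Adj i j then ∑ k, ‖Y i j k - μ‖ ^ 2 else 0)
      = ∑ i, ∑ j, (if G.Adj i j then Γ else 0)
        - (1 / 2) * ∑ i, ∑ j, (if G.Adj i j then ‖X i - X j‖ ^ 2 else 0) := by
    simp only [mul_sum, ← sum_sub_distrib]
    refine sum_congr rfl fun i _ => sum_congr rfl fun j _ => ?_
    split_ifs with h
    · rw [hedge i j h]; ring
    · ring
  rw [hsum, hreg.sum_sum_ite_adj_const, Fintype.card_fin, inv_mul_le_iff₀ (by positivity)]
  field_simp
  linarith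

/-- Expected potential decrease for a uniformly random pairwise averaging step on an
r-regular graph: E[Γ'] ≤ (1 − λ₂/(rn)) Γ. -/
theorem expected_potential_decrease (n d r : ℕ) (hn : 0 < n) (hr : 0 < r)
    (G : SimpleGraph (Fin n)) [DecidableRel G.Adj]
    (hreg : G.IsRegularOfDegree r)
    (lam2 : ℝ) (hlam2pos : 0 < lam2)
    (X : Fin n → EuclideanSpace ℝ (Fin d))
    (μ : EuclideanSpace ℝ (Fin d)) (hμ : μ = (n : ℝ)⁻¹ • ∑ k, X k)
    (Γ : ℝ) (hΓ : Γ = ∑ k, ‖X k - μ‖ ^ 2)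
    (hlam : lam2 * Γ ≤
      (1 / 2) * ∑ i, ∑ j, if G.Adj i j then ‖X i - X j‖ ^ 2 else 0)
    (Y : Fin n → Fin n → Fin n → EuclideanSpace ℝ (Fin d))
    (hY : ∀ i j k, Y i j k =
      if k = i ∨ k = j then (2 : ℝ)⁻¹ • (X i + X j) else X k) :
    ((r : ℝ) * n / 2)⁻¹ *
        ((1 / 2) * ∑ i, ∑ j, if G.Adj i j then (∑ k, ‖Y i j k - μ‖ ^ 2) else 0) ≤
      (1 - lam2 / ((r : ℝ) * n)) * Γ :=
  expected_potential_decrease_general n d r hn hr G hreg lam2 X μ Γ hΓ hlam Y hY
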